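/- Existence of γ-normal forms in the λ^q-calculus: for every λ^q-term M there exists a λ^q-term N such that M ↠_γ N and N contains no γ-redexes; consequently (together with the Church-Rosser property of γ) every λ^q-term M has a unique γ-normal form γ(M). -/

import Mathlib

/-- Signs (phases) of the λ^q-calculus. -/
inductive Sign : Type
  | pos : Sign
  | neg : Sign
deriving DecidableEq

/-- λ^q-terms: M ::= Sx | M₁ M₂ | Sλx.M | (M₁, M₂), where S ∈ {+,−} is a
sign, over a countably infinite set of variables. -/
inductive QTerm : Type
  | var : Sign → ℕ → QTerm
  | app : QTerm → QTerm → QTerm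
  | lam : Sign → ℕ → QTerm → QTerm
  | coll : QTerm → QTerm → QTerm

/-- The congruence on λ^q-terms generated by (ClnOrd) M,N ≡ N,M and
(ClnNest) (M,N),P ≡ M,(N,P). -/
inductive CongQ : QTerm → QTerm → Prop
  | refl (M : QTerm) : CongQ M M
  | symm {M N : QTerm} : CongQ M N → CongQ N M
  | trans {M N P : QTerm} : CongQ M N → CongQ N P → CongQ M P
  | app {M M' N N' : QTerm} : CongQ M M' → CongQ N N' → CongQ (.app M N) (.app M' N')
  | lam (s : Sign) (x : ℕ) {M M' : QTerm} : CongQ M M' → CongQ (.lam s x M) (.lam s x M')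
  | coll {M M' N N' : QTerm} : CongQ M M' → CongQ N N' → CongQ (.coll M N) (.coll M' N')
  | ord (M N : QTerm) : CongQ (.coll M N) (.coll N M)
  | nest (M N P : QTerm) : CongQ (.coll (.coll M N) P) (.coll M (.coll N P))

/-- `collOf M [N₁,…,Nₖ]` is the right-associated collection `(M, N₁, …, Nₖ)`. -/
def collOf : QTerm → List QTerm → QTerm
  | M, [] => M
  | M, N :: L => .coll M (collOf N L)

/-- A term is a collection if its outermost constructor is the comma. -/
def IsColl : QTerm → Prop
  | .coll _ _ => True
  | _ => False

/-- The γ-relation of the λ^q-calculus: it relates each application P Q, where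
P is congruent to a collection (M₀,…,M_m) and Q to a collection (N₀,…,N_n)
with at least one of them a proper (more-than-one-element) collection, to the
collection of all applications M_i N_j. -/
inductive GammaQ : QTerm → QTerm → Prop
  | mk (P Q M N : QTerm) (Ms Ns : List QTerm)
      (hP : CongQ P (collOf M Ms)) (hQ : CongQ Q (collOf N Ns))
      (hn : Ms ≠ [] ∨ Ns ≠ []) :
      GammaQ (.app P Q)
        (collOf (.app M N)
          (Ns.map (.app M) ++ Ms.flatMap fun Mi => (N :: Ns).map (.app Mi)))

/-- One-step γ-reduction: the compatible closure of the γ-relation. -/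
inductive StepGQ : QTerm → QTerm → Prop
  | gamma {M N : QTerm} : GammaQ M N → StepGQ M N
  | appL {M M' N : QTerm} : StepGQ M M' → StepGQ (.app M N) (.app M' N)
  | appR {M N N' : QTerm} : StepGQ N N' → StepGQ (.app M N) (.app M N')
  | lam (s : Sign) (x : ℕ) {M M' : QTerm} : StepGQ M M' → StepGQ (.lam s x M) (.lam s x M')
  | collL {M M' N : QTerm} : StepGQ M M' → StepGQ (.coll M N) (.coll M' N)
  | collR {M N N' : QTerm} : StepGQ N N' → StepGQ (.coll M N) (.coll M N')

/-- γ-reduction ↠_γ : the reflexive-transitive closure of one-step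
γ-reduction, on terms considered up to the congruence generated by
(ClnOrd) and (ClnNest). -/
def RedGQ : QTerm → QTerm → Prop :=
  Relation.ReflTransGen (fun M N => StepGQ M N ∨ CongQ M N)

/-- A term is in γ-normal form if it contains no γ-redex. -/
def NoGammaRedexQ : QTerm → Prop
  | .var _ _ => True
  | .lam _ _ M => NoGammaRedexQ M
  | .app P Q => ¬ IsColl P ∧ ¬ IsColl Q ∧ NoGammaRedexQ P ∧ NoGammaRedexQ Q
  | .coll P Q => NoGammaRedexQ P ∧ NoGammaRedexQ Q

/-!
`gammaNF` normalises structurally: after normalising both sides of an application it distributes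
the application over their top-level components, which the binary γ-steps
`(M₁, M₂) N → (M₁ N, M₂ N)` and `M (N₁, N₂) → (M N₁, M N₂)` achieve. For uniqueness, note that a
term is determined up to congruence by the multiset of congruence classes of its top-level
components. On these multisets, distributing an application is a product, and products
distribute over sums; hence `gammaNF` sends congruent terms, and the two sides of a γ-step, to
congruent terms. As `gammaNF` fixes every normal form, each normal form reachable from `M` is
congruent to `gammaNF M`.
-/

theorem Multiset.bind_map_bind_eq_bind_bind {α β γ δ ε : Type*} (s : Multiset α)
    (t : Multiset β) (f : α → Multiset γ) (g : β → Multiset δ) (h : γ → δ → ε) :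
    ((s.bind f).bind fun x => (t.bind g).map (h x)) =
      s.bind fun a => t.bind fun b => (f a).bind fun x => (g b).map (h x) := by
  simp only [Multiset.bind_assoc, Multiset.map_bind]
  exact Multiset.bind_congr fun a _ => Multiset.bind_bind _ _

theorem StepGQ.app_coll_left (M₁ M₂ N : QTerm) :
    StepGQ (.app (.coll M₁ M₂) N) (.coll (.app M₁ N) (.app M₂ N)) :=
  .gamma (.mk _ _ M₁ N [M₂] [] (.refl _) (.refl _) (.inl (List.cons_ne_nil _ _)))

theorem StepGQ.app_coll_right (M N₁ N₂ : QTerm) :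
    StepGQ (.app M (.coll N₁ N₂)) (.coll (.app M N₁) (.app M N₂)) :=
  .gamma (.mk _ _ M N₁ [] [N₂] (.refl _) (.refl _) (.inr (List.cons_ne_nil _ _)))

theorem RedGQ.lift (C : QTerm → QTerm) (hstep : ∀ {M N}, StepGQ M N → StepGQ (C M) (C N))
    (hcong : ∀ {M N}, CongQ M N → CongQ (C M) (C N)) {M N : QTerm} (h : RedGQ M N) :
    RedGQ (C M) (C N) :=
  Relation.ReflTransGen.lift C (fun _ _ => Or.imp hstep hcong) _ _ h

theorem RedGQ.app {M M' N N' : QTerm} (hM : RedGQ M M') (hN : RedGQ N N') :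
    RedGQ (.app M N) (.app M' N') :=
  (hM.lift (.app · N) StepGQ.appL (CongQ.app · (.refl N))).trans
    (hN.lift (.app M') StepGQ.appR (CongQ.app (.refl M')))

theorem RedGQ.coll {M M' N N' : QTerm} (hM : RedGQ M M') (hN : RedGQ N N') :
    RedGQ (.coll M N) (.coll M' N') :=
  (hM.lift (.coll · N) StepGQ.collL (CongQ.coll · (.refl N))).trans
    (hN.lift (.coll M') StepGQ.collR (CongQ.coll (.refl M')))

theorem RedGQ.lam (s : Sign) (x : ℕ) {M M' : QTerm} (h : RedGQ M M') :
    RedGQ (.lam s x M) (.lam s x M') :=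
  h.lift (.lam s x) (StepGQ.lam s x) (CongQ.lam s x)

theorem RedGQ.of_step {M N : QTerm} (h : StepGQ M N) : RedGQ M N :=
  .single (.inl h)

instance QTerm.congSetoid : Setoid QTerm :=
  ⟨CongQ, CongQ.refl, CongQ.symm, CongQ.trans⟩

abbrev QClass : Type := Quotient QTerm.congSetoid

def QClass.app : QClass → QClass → QClass :=
  Quotient.map₂ QTerm.app fun _ _ hM _ _ hN => CongQ.app hM hN

namespace QTerm

def components : QTerm → List QTerm
  | .coll M N => M.components ++ N.components
  | M => [M]

def componentClasses : QTerm → Multiset QClass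
  | .coll M N => M.componentClasses + N.componentClasses
  | M => {⟦M⟧}

/-- Junk value at `[]`, which is never a list of components. -/
def ofComponents : List QTerm → QTerm
  | [] => .var .pos 0
  | M :: Ms => collOf M Ms

theorem components_ne_nil : ∀ M : QTerm, M.components ≠ []
  | .coll M _ => by simp [components, M.components_ne_nil]
  | .var _ _ | .app _ _ | .lam _ _ _ => List.cons_ne_nil _ _

theorem componentClasses_eq_map_components :
    ∀ M : QTerm, M.componentClasses = (M.components.map (⟦·⟧) : List QClass)
  | .coll M N => by
      simp [components, componentClasses, M.componentClasses_eq_map_components,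
        N.componentClasses_eq_map_components]
  | .var _ _ | .app _ _ | .lam _ _ _ => rfl

theorem ofComponents_cons_of_ne_nil (M : QTerm) {Ms : List QTerm} (h : Ms ≠ []) :
    ofComponents (M :: Ms) = .coll M (ofComponents Ms) := by
  cases Ms with
  | nil => exact absurd rfl h
  | cons => rfl

theorem congQ_coll_ofComponents_append :
    ∀ {Ms : List QTerm}, Ms ≠ [] → ∀ {Ns : List QTerm}, Ns ≠ [] →
      CongQ (.coll (ofComponents Ms) (ofComponents Ns)) (ofComponents (Ms ++ Ns))
  | [M], _, Ns, hN => by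
      rw [List.singleton_append, ofComponents_cons_of_ne_nil M hN]
      exact CongQ.refl _
  | M :: M' :: Ms, _, Ns, hN => by
      rw [ofComponents_cons_of_ne_nil M (List.cons_ne_nil _ _), List.cons_append,
        ofComponents_cons_of_ne_nil M (by simp)]
      exact (CongQ.nest _ _ _).trans
        (CongQ.coll (CongQ.refl M) (congQ_coll_ofComponents_append (List.cons_ne_nil _ _) hN))

theorem congQ_ofComponents_components : ∀ M : QTerm, CongQ M (ofComponents M.components)
  | .coll M N =>
      (CongQ.coll M.congQ_ofComponents_components N.congQ_ofComponents_components).trans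
        (congQ_coll_ofComponents_append M.components_ne_nil N.components_ne_nil)
  | .var _ _ | .app _ _ | .lam _ _ _ => CongQ.refl _

theorem congQ_ofComponents_of_perm {Ms Ns : List QTerm} (h : Ms.Perm Ns) :
    CongQ (ofComponents Ms) (ofComponents Ns) := by
  induction h with
  | nil => exact CongQ.refl _
  | @cons M Ms Ns h ih =>
      rcases eq_or_ne Ms [] with rfl | hMs
      · rw [List.nil_perm.1 h]; exact CongQ.refl _
      · rw [ofComponents_cons_of_ne_nil M hMs,
          ofComponents_cons_of_ne_nil M fun hNs => hMs (hNs ▸ h).eq_nil]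
        exact CongQ.coll (CongQ.refl M) ih
  | swap M N Ms =>
      rcases eq_or_ne Ms [] with rfl | hMs
      · exact CongQ.ord N M
      · simp only [ofComponents_cons_of_ne_nil _ hMs,
          ofComponents_cons_of_ne_nil _ (List.cons_ne_nil _ _)]
        exact (CongQ.nest N M _).symm.trans
          ((CongQ.coll (CongQ.ord N M) (CongQ.refl _)).trans (CongQ.nest M N _))
  | trans _ _ ih₁ ih₂ => exact ih₁.trans ih₂

theorem congQ_ofComponents_of_forall₂ {Ms Ns : List QTerm} (h : List.Forall₂ CongQ Ms Ns) :
    CongQ (ofComponents Ms) (ofComponents Ns) := by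
  induction h with
  | nil => exact CongQ.refl _
  | @cons M N Ms Ns hMN h ih =>
      cases h with
      | nil => exact hMN
      | cons => exact CongQ.coll hMN ih

theorem congQ_ofComponents_of_map_perm {Ms Ns : List QTerm}
    (h : (Ms.map (⟦·⟧ : QTerm → QClass)).Perm (Ns.map (⟦·⟧))) :
    CongQ (ofComponents Ms) (ofComponents Ns) := by
  have hNs : List.Forall₂ (fun c N => c = ⟦N⟧) (Ns.map (⟦·⟧ : QTerm → QClass)) Ns :=
    List.forall₂_map_left_iff.2 (List.forall₂_same.2 fun _ _ => rfl)
  obtain ⟨Ls, hLs, hperm⟩ := List.perm_comp_forall₂ h hNs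
  rw [List.forall₂_map_left_iff] at hLs
  exact (congQ_ofComponents_of_forall₂ (hLs.imp fun _ _ => Quotient.exact)).trans
    (congQ_ofComponents_of_perm hperm)

theorem congQ_iff_componentClasses_eq {M N : QTerm} :
    CongQ M N ↔ M.componentClasses = N.componentClasses := by
  refine ⟨fun h => ?_, fun h => ?_⟩
  · induction h with
    | refl => rfl
    | symm _ ih => exact ih.symm
    | trans _ _ ih₁ ih₂ => exact ih₁.trans ih₂
    | app h₁ h₂ => exact congrArg ({·}) (Quotient.sound (CongQ.app h₁ h₂))
    | lam s x h => exact congrArg ({·}) (Quotient.sound (CongQ.lam s x h))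
    | coll _ _ ih₁ ih₂ => exact congrArg₂ (· + ·) ih₁ ih₂
    | ord => exact add_comm _ _
    | nest => exact add_assoc _ _ _
  · rw [componentClasses_eq_map_components, componentClasses_eq_map_components,
      Multiset.coe_eq_coe] at h
    exact M.congQ_ofComponents_components.trans
      ((congQ_ofComponents_of_map_perm h).trans N.congQ_ofComponents_components.symm)

def mapComponents (f : QTerm → QTerm) : QTerm → QTerm
  | .coll M N => .coll (M.mapComponents f) (N.mapComponents f)
  | M => f M

theorem mapComponents_of_not_isColl (f : QTerm → QTerm) {M : QTerm} (h : ¬ IsColl M) :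
    M.mapComponents f = f M := by
  cases M <;> first | rfl | exact absurd trivial h

theorem componentClasses_mapComponents {f : QTerm → QTerm} {F : QClass → Multiset QClass}
    (hf : ∀ M, ¬ IsColl M → (f M).componentClasses = F ⟦M⟧) :
    ∀ M : QTerm, (M.mapComponents f).componentClasses = M.componentClasses.bind F
  | .coll M N => by
      simp only [mapComponents, componentClasses, Multiset.add_bind,
        componentClasses_mapComponents hf M, componentClasses_mapComponents hf N]
  | .var _ _ | .app _ _ | .lam _ _ _ => (hf _ id).trans (Multiset.singleton_bind ..).symm

theorem noGammaRedexQ_mapComponents {f : QTerm → QTerm}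
    (hf : ∀ M, ¬ IsColl M → NoGammaRedexQ M → NoGammaRedexQ (f M)) :
    ∀ M : QTerm, NoGammaRedexQ M → NoGammaRedexQ (M.mapComponents f)
  | .coll M N, ⟨hM, hN⟩ =>
      ⟨noGammaRedexQ_mapComponents hf M hM, noGammaRedexQ_mapComponents hf N hN⟩
  | .var _ _, h | .app _ _, h | .lam _ _ _, h => hf _ id h

def distribApp (M N : QTerm) : QTerm :=
  M.mapComponents fun M' => N.mapComponents (.app M')

theorem componentClasses_distribApp (M N : QTerm) :
    (M.distribApp N).componentClasses =
      M.componentClasses.bind fun x => N.componentClasses.map x.app := by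
  refine componentClasses_mapComponents (fun M' _ => ?_) M
  rw [componentClasses_mapComponents (F := fun y => {QClass.app ⟦M'⟧ y}) (fun _ _ => rfl) N,
    Multiset.bind_singleton]

theorem congQ_distribApp {M M' N N' : QTerm} (hM : CongQ M M') (hN : CongQ N N') :
    CongQ (M.distribApp N) (M'.distribApp N') := by
  rw [congQ_iff_componentClasses_eq] at *
  rw [componentClasses_distribApp, componentClasses_distribApp, hM, hN]

theorem redGQ_app_mapComponents (M : QTerm) :
    ∀ N : QTerm, RedGQ (.app M N) (N.mapComponents (.app M))
  | .coll N₁ N₂ => (RedGQ.of_step (StepGQ.app_coll_right M N₁ N₂)).trans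
      ((redGQ_app_mapComponents M N₁).coll (redGQ_app_mapComponents M N₂))
  | .var _ _ | .app _ _ | .lam _ _ _ => .refl

theorem redGQ_distribApp : ∀ M N : QTerm, RedGQ (.app M N) (M.distribApp N)
  | .coll M₁ M₂, N => (RedGQ.of_step (StepGQ.app_coll_left M₁ M₂ N)).trans
      ((redGQ_distribApp M₁ N).coll (redGQ_distribApp M₂ N))
  | .var _ _, N | .app _ _, N | .lam _ _ _, N => redGQ_app_mapComponents _ N

theorem noGammaRedexQ_distribApp {M N : QTerm} (hM : NoGammaRedexQ M)
    (hN : NoGammaRedexQ N) : NoGammaRedexQ (M.distribApp N) :=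
  noGammaRedexQ_mapComponents (fun M' hM' hM'' => noGammaRedexQ_mapComponents (f := .app M')
    (fun _ hN' hN'' => ⟨hM', hN', hM'', hN''⟩) N hN) M hM

def gammaNF : QTerm → QTerm
  | .var s x => .var s x
  | .lam s x M => .lam s x M.gammaNF
  | .coll M N => .coll M.gammaNF N.gammaNF
  | .app M N => M.gammaNF.distribApp N.gammaNF

theorem redGQ_gammaNF : ∀ M : QTerm, RedGQ M M.gammaNF
  | .var _ _ => .refl
  | .lam s x M => M.redGQ_gammaNF.lam s x
  | .coll M N => M.redGQ_gammaNF.coll N.redGQ_gammaNF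
  | .app M N => (M.redGQ_gammaNF.app N.redGQ_gammaNF).trans (redGQ_distribApp _ _)

theorem noGammaRedexQ_gammaNF : ∀ M : QTerm, NoGammaRedexQ M.gammaNF
  | .var _ _ => trivial
  | .lam _ _ M => M.noGammaRedexQ_gammaNF
  | .coll M N => ⟨M.noGammaRedexQ_gammaNF, N.noGammaRedexQ_gammaNF⟩
  | .app M N => noGammaRedexQ_distribApp M.noGammaRedexQ_gammaNF N.noGammaRedexQ_gammaNF

theorem gammaNF_eq_self : ∀ {M : QTerm}, NoGammaRedexQ M → M.gammaNF = M
  | .var _ _, _ => rfl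
  | .lam s x M, h => congrArg (QTerm.lam s x) (gammaNF_eq_self (M := M) h)
  | .coll _ _, ⟨hM, hN⟩ => congrArg₂ QTerm.coll (gammaNF_eq_self hM) (gammaNF_eq_self hN)
  | .app _ _, ⟨hM, hN, hM', hN'⟩ => by
      rw [gammaNF, gammaNF_eq_self hM', gammaNF_eq_self hN', distribApp,
        mapComponents_of_not_isColl _ hM, mapComponents_of_not_isColl _ hN]

theorem componentClasses_gammaNF_collOf (M : QTerm) (Ms : List QTerm) :
    (collOf M Ms).gammaNF.componentClasses =
      ((M :: Ms : List QTerm) : Multiset QTerm).bind fun M' => M'.gammaNF.componentClasses := by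
  induction Ms generalizing M with
  | nil => simp [collOf]
  | cons M' Ms ih => simp [collOf, gammaNF, componentClasses, ih, ← Multiset.cons_coe]

end QTerm

open QTerm

theorem CongQ.gammaNF {M N : QTerm} (h : CongQ M N) : CongQ M.gammaNF N.gammaNF := by
  induction h with
  | refl => exact .refl _
  | symm _ ih => exact ih.symm
  | trans _ _ ih₁ ih₂ => exact ih₁.trans ih₂
  | app _ _ ih₁ ih₂ => exact congQ_distribApp ih₁ ih₂
  | lam s x _ ih => exact .lam s x ih
  | coll _ _ ih₁ ih₂ => exact .coll ih₁ ih₂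
  | ord => exact .ord _ _
  | nest => exact .nest _ _ _

theorem GammaQ.congQ_gammaNF {M N : QTerm} (h : GammaQ M N) : CongQ M.gammaNF N.gammaNF := by
  obtain ⟨P, Q, M, N, Ms, Ns, hP, hQ, -⟩ := h
  have hcontractum :
      QTerm.app M N :: (Ns.map (.app M) ++ Ms.flatMap fun Mi => (N :: Ns).map (.app Mi)) =
        (M :: Ms).flatMap fun Mi => (N :: Ns).map (.app Mi) := rfl
  rw [congQ_iff_componentClasses_eq, gammaNF, componentClasses_distribApp,
    congQ_iff_componentClasses_eq.1 hP.gammaNF, congQ_iff_componentClasses_eq.1 hQ.gammaNF,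
    componentClasses_gammaNF_collOf, componentClasses_gammaNF_collOf,
    componentClasses_gammaNF_collOf, hcontractum, Multiset.bind_map_bind_eq_bind_bind,
    ← Multiset.coe_bind, Multiset.bind_assoc]
  simp only [← Multiset.map_coe, Multiset.bind_map, gammaNF, componentClasses_distribApp]

theorem StepGQ.congQ_gammaNF {M N : QTerm} (h : StepGQ M N) : CongQ M.gammaNF N.gammaNF := by
  induction h with
  | gamma h => exact h.congQ_gammaNF
  | appL _ ih => exact congQ_distribApp ih (.refl _)
  | appR _ ih => exact congQ_distribApp (.refl _) ih
  | lam s x _ ih => exact .lam s x ih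
  | collL _ ih => exact .coll ih (.refl _)
  | collR _ ih => exact .coll (.refl _) ih

theorem RedGQ.congQ_gammaNF {M N : QTerm} (h : RedGQ M N) : CongQ M.gammaNF N.gammaNF := by
  induction h with
  | refl => exact .refl _
  | tail _ hstep ih => exact ih.trans (hstep.elim StepGQ.congQ_gammaNF CongQ.gammaNF)

/-- Existence of γ-normal forms in the λ^q-calculus: every λ^q-term M
γ-reduces to some term N containing no γ-redexes; consequently (together
with the Church-Rosser property of γ) every λ^q-term has a unique γ-normal
form γ(M), unique up to the congruence. -/
theorem gammaQ_normal_form_exists (M : QTerm) :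
    ∃ N : QTerm, RedGQ M N ∧ NoGammaRedexQ N ∧
      ∀ N' : QTerm, RedGQ M N' → NoGammaRedexQ N' → CongQ N' N := by
  refine ⟨M.gammaNF, M.redGQ_gammaNF, M.noGammaRedexQ_gammaNF, fun N hMN hN => ?_⟩
  simpa only [gammaNF_eq_self hN] using hMN.congQ_gammaNF.symm
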